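/- Let A = C*C and B = D*D with C, D invertible, and suppose U is a unitary matrix such that C* U D is Hermitian positive definite. Then C* U D = A # B and U is the unitary polar factor of C D^{-1}. -/

import Mathlib

/-! With `S = Cᴴ U D`, unitarity of `U` gives the Riccati equation `S A⁻¹ S = B`, whose unique
positive definite solution is `A # B`. Moreover `Uᴴ (C D⁻¹) = D⁻ᴴ S D⁻¹` is positive definite and
squares to `(C D⁻¹)ᴴ (C D⁻¹)`, so it is the positive square root of that matrix, and `U` is the
polar factor. -/

open Matrix ComplexOrder

namespace Matrix.PosSemidef

/-- The positive semidefinite square root of a positive semidefinite matrix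
(the definition of the older Mathlib, since removed). -/
noncomputable def sqrt {𝕜 : Type*} [RCLike 𝕜] {n : Type*} [Fintype n] [DecidableEq n]
    {A : Matrix n n 𝕜} (hA : A.PosSemidef) : Matrix n n 𝕜 :=
  hA.1.eigenvectorUnitary.1 * diagonal ((↑) ∘ (√·) ∘ hA.1.eigenvalues) *
  (star hA.1.eigenvectorUnitary : Matrix n n 𝕜)

lemma posSemidef_sqrt {𝕜 : Type*} [RCLike 𝕜] {n : Type*} [Fintype n] [DecidableEq n]
    {A : Matrix n n 𝕜} (hA : A.PosSemidef) : PosSemidef hA.sqrt := by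
  unfold sqrt
  have h := (posSemidef_diagonal_iff.mpr (fun i => by
    simp only [Function.comp_apply, RCLike.ofReal_nonneg]; exact Real.sqrt_nonneg _) :
      PosSemidef (diagonal ((↑) ∘ (√·) ∘ hA.1.eigenvalues) : Matrix n n 𝕜)).mul_mul_conjTranspose_same
    (hA.1.eigenvectorUnitary : Matrix n n 𝕜)
  simpa [Matrix.star_eq_conjTranspose] using h

end Matrix.PosSemidef

lemma geomMean_aux {n : ℕ} {A B : Matrix (Fin n) (Fin n) ℂ} (hA : A.PosDef) (hB : B.PosDef) :
    ((hA.posSemidef.sqrt)⁻¹ * B * (hA.posSemidef.sqrt)⁻¹).PosSemidef := by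
  have h := hB.posSemidef.conjTranspose_mul_mul_same (hA.posSemidef.sqrt)⁻¹
  rwa [(hA.posSemidef.posSemidef_sqrt.isHermitian.inv).eq] at h

/-- The geometric mean `A # B = A^{1/2} (A^{-1/2} B A^{-1/2})^{1/2} A^{1/2}` of two
Hermitian positive definite matrices. -/
noncomputable def geomMean {n : ℕ} {A B : Matrix (Fin n) (Fin n) ℂ}
    (hA : A.PosDef) (hB : B.PosDef) : Matrix (Fin n) (Fin n) ℂ :=
  hA.posSemidef.sqrt * (geomMean_aux hA hB).sqrt * hA.posSemidef.sqrt

namespace Matrix.PosSemidef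

variable {𝕜 : Type*} [RCLike 𝕜] {n : Type*} [Fintype n] [DecidableEq n]

open scoped MatrixOrder

lemma sqrt_eq_cfc_sqrt {A : Matrix n n 𝕜} (hA : A.PosSemidef) : hA.sqrt = CFC.sqrt A := by
  rw [CFC.sqrt_eq_cfc, cfc_nnreal_eq_real _ A, hA.1.cfc_eq]
  simp only [IsHermitian.cfc, sqrt, Unitary.conjStarAlgAut_apply]
  congr 3
  funext i
  simp [Real.coe_sqrt, Real.coe_toNNReal', max_eq_left (hA.eigenvalues_nonneg i)]

lemma sqrt_mul_self {A : Matrix n n 𝕜} (hA : A.PosSemidef) : hA.sqrt * hA.sqrt = A := by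
  rw [sqrt_eq_cfc_sqrt]
  exact CFC.sqrt_mul_sqrt_self A hA.nonneg

lemma eq_sqrt_of_sq_eq {A B : Matrix n n 𝕜} (hA : A.PosSemidef) (hB : B.PosSemidef)
    (h : A ^ 2 = B) : A = hB.sqrt := by
  rw [sqrt_eq_cfc_sqrt, ← h, CFC.sqrt_sq A hA.nonneg]

end Matrix.PosSemidef

lemma Matrix.PosDef.isUnit_sqrt {𝕜 : Type*} [RCLike 𝕜] {n : Type*} [Fintype n] [DecidableEq n]
    {A : Matrix n n 𝕜} (hA : A.PosDef) : IsUnit hA.posSemidef.sqrt :=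
  isUnit_of_mul_isUnit_left <| hA.posSemidef.sqrt_mul_self ▸ hA.isUnit

/-- `A^{-1/2} S A^{-1/2}` is a positive definite square root of `A^{-1/2} B A^{-1/2}`. -/
theorem eq_geomMean_of_mul_inv_mul_eq {n : ℕ} {A B S : Matrix (Fin n) (Fin n) ℂ}
    (hA : A.PosDef) (hB : B.PosDef) (hS : S.PosDef) (h : S * A⁻¹ * S = B) :
    S = geomMean hA hB := by
  set R := hA.posSemidef.sqrt
  have hR : IsUnit R.det := (isUnit_iff_isUnit_det R).1 hA.isUnit_sqrt
  have hRR : R⁻¹ * R⁻¹ = A⁻¹ := by rw [← Matrix.mul_inv_rev, hA.posSemidef.sqrt_mul_self]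
  have hW : (R⁻¹ * S * R⁻¹).PosDef := by
    have := (isUnit_nonsing_inv_iff.2 hA.isUnit_sqrt).posDef_star_left_conjugate_iff.2 hS
    rwa [star_eq_conjTranspose, hA.posSemidef.posSemidef_sqrt.isHermitian.inv.eq] at this
  have hW_sq : (R⁻¹ * S * R⁻¹) ^ 2 = R⁻¹ * B * R⁻¹ := by
    rw [← h, ← hRR]; noncomm_ring
  rw [geomMean, ← hW.posSemidef.eq_sqrt_of_sq_eq _ hW_sq]
  change S = R * (R⁻¹ * S * R⁻¹) * R
  simp only [Matrix.mul_assoc, nonsing_inv_mul (h := hR), Matrix.mul_one,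
    mul_nonsing_inv_cancel_left (h := hR)]

theorem mul_inv_mul_eq_conjTranspose_mul_self {R : Type*} [CommRing R] [StarRing R]
    {n : Type*} [Fintype n] [DecidableEq n] {C D U : Matrix n n R}
    (hC : IsUnit C.det) (hU : Uᴴ * U = 1) (hS : (Cᴴ * U * D).IsHermitian) :
    (Cᴴ * U * D) * (Cᴴ * C)⁻¹ * (Cᴴ * U * D) = Dᴴ * D := by
  have hC' : IsUnit Cᴴ.det := by rw [det_conjTranspose]; exact hC.star
  nth_rewrite 1 [← hS.eq]
  simp only [conjTranspose_mul, conjTranspose_conjTranspose, Matrix.mul_inv_rev, Matrix.mul_assoc,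
    mul_nonsing_inv_cancel_left (h := hC), nonsing_inv_mul_cancel_left (h := hC')]
  rw [← Matrix.mul_assoc Uᴴ, hU, Matrix.one_mul]

theorem eq_mul_inv_sqrt_of_posDef_conjTranspose_mul {𝕜 : Type*} [RCLike 𝕜] {n : Type*}
    [Fintype n] [DecidableEq n] {U M : Matrix n n 𝕜} (hU : U * Uᴴ = 1) (hUM : (Uᴴ * M).PosDef)
    (hM : (Mᴴ * M).PosDef) : U = M * hM.posSemidef.sqrt⁻¹ := by
  have hUT : U * (Uᴴ * M) = M := by rw [← Matrix.mul_assoc, hU, Matrix.one_mul]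
  have hT_sq : (Uᴴ * M) ^ 2 = Mᴴ * M := by
    calc (Uᴴ * M) ^ 2 = (Uᴴ * M)ᴴ * (Uᴴ * M) := by rw [sq, hUM.isHermitian.eq]
      _ = Mᴴ * M := by rw [conjTranspose_mul, conjTranspose_conjTranspose, Matrix.mul_assoc, hUT]
  have hT : IsUnit (Uᴴ * M).det := (isUnit_iff_isUnit_det _).1 hUM.isUnit
  rw [← hUM.posSemidef.eq_sqrt_of_sq_eq _ hT_sq]
  calc U = U * (Uᴴ * M) * (Uᴴ * M)⁻¹ := (mul_nonsing_inv_cancel_right _ U hT).symm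
    _ = M * (Uᴴ * M)⁻¹ := by rw [hUT]

/-- If `A = Cᴴ C`, `B = Dᴴ D` with `C, D` invertible and `U` is unitary with `Cᴴ U D`
Hermitian positive definite, then `Cᴴ U D = A # B` and `U` is the unitary polar factor
`(C D⁻¹) * ((C D⁻¹)ᴴ (C D⁻¹))^{-1/2}` of `C D⁻¹`. -/
theorem geomMean_of_unitary_posDef {n : ℕ} {A B C D U : Matrix (Fin n) (Fin n) ℂ}
    (hA : A.PosDef) (hB : B.PosDef)
    (hC : IsUnit C.det) (hD : IsUnit D.det)
    (hAC : A = Cᴴ * C) (hBD : B = Dᴴ * D)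
    (hU : Uᴴ * U = 1) (hU' : U * Uᴴ = 1)
    (hpos : (Cᴴ * U * D).PosDef)
    (hM : ((C * D⁻¹)ᴴ * (C * D⁻¹)).PosDef) :
    Cᴴ * U * D = geomMean hA hB ∧ U = C * D⁻¹ * (hM.posSemidef.sqrt)⁻¹ := by
  have hD' : IsUnit Dᴴ.det := by rw [det_conjTranspose]; exact hD.star
  have hriccati := mul_inv_mul_eq_conjTranspose_mul_self hC hU hpos.isHermitian
  rw [← hAC, ← hBD] at hriccati
  have hUCD : Uᴴ * (C * D⁻¹) = star D⁻¹ * (Cᴴ * U * D) * D⁻¹ := by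
    rw [← hpos.isHermitian.eq]
    simp only [star_eq_conjTranspose, conjTranspose_mul, conjTranspose_conjTranspose,
      conjTranspose_nonsing_inv, Matrix.mul_assoc, nonsing_inv_mul_cancel_left (h := hD')]
  have hUCD_pos : (Uᴴ * (C * D⁻¹)).PosDef := by
    rw [hUCD]
    exact (isUnit_nonsing_inv_iff.2 ((isUnit_iff_isUnit_det D).2 hD)).posDef_star_left_conjugate_iff.2
      hpos
  exact ⟨eq_geomMean_of_mul_inv_mul_eq hA hB hpos hriccati,
    eq_mul_inv_sqrt_of_posDef_conjTranspose_mul hU' hUCD_pos hM⟩
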